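/- arXiv:2504.16797 — 4 statements merged into one kernel-verified Lean document; each statement's English description precedes it below -/
import Mathlib

section
/- Fix f ∈ W and let s ⊆ X be an open set such that for every θ ∈ s there is a two-sided inverse E(θ) : W →L U of D(θ). Define the parameter-to-state map S : s → U by S(θ) := E(θ)f. Then for every θ₀ ∈ s, S is Fréchet differentiable at θ₀ with derivative the continuous linear map h ↦ −E(θ₀)((B(S(θ₀)))h); i.e. S has at θ₀ the Fréchet derivative −E(θ₀) ∘ B(S(θ₀)). -/
/-!
Near `θ₀` the operators `E θ` are the inverses of `D θ = K + B.flip θ`, which depends affinely on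
`θ`; since inversion is smooth on the invertible operators of a Banach space, `θ ↦ E θ f` is
differentiable at `θ₀`. Differentiating the state equation `D θ (S θ) = f` then gives
`D θ₀ ∘ S' + B (S θ₀) = 0`, and applying `E θ₀` yields `S' = -E θ₀ ∘ B (S θ₀)`.
-/

open ContinuousLinearMap Filter Topology

section

variable {𝕜 : Type*} [NontriviallyNormedField 𝕜]
  {X U W : Type*} [NormedAddCommGroup X] [NormedSpace 𝕜 X]
  [NormedAddCommGroup U] [NormedSpace 𝕜 U] [NormedAddCommGroup W] [NormedSpace 𝕜 W]

theorem ContinuousLinearMap.isInvertible_of_comp_eq_id {A : U →L[𝕜] W} {E : W →L[𝕜] U}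
    (hAE : A.comp E = .id 𝕜 W) (hEA : E.comp A = .id 𝕜 U) : A.IsInvertible :=
  ⟨.equivOfInverse' A E hAE hEA, rfl⟩

theorem ContinuousLinearMap.inverse_eq_of_comp_eq_id {A : U →L[𝕜] W} {E : W →L[𝕜] U}
    (hAE : A.comp E = .id 𝕜 W) (hEA : E.comp A = .id 𝕜 U) : inverse A = E :=
  inverse_equiv (.equivOfInverse' A E hAE hEA)

theorem DifferentiableAt.of_eventually_comp_eq_id [CompleteSpace U] {D : X → U →L[𝕜] W}
    {E : X → W →L[𝕜] U} {x₀ : X} (hD : DifferentiableAt 𝕜 D x₀)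
    (hDE : ∀ᶠ x in 𝓝 x₀, (D x).comp (E x) = .id 𝕜 W)
    (hED : ∀ᶠ x in 𝓝 x₀, (E x).comp (D x) = .id 𝕜 U) :
    DifferentiableAt 𝕜 E x₀ := by
  have hinv : DifferentiableAt 𝕜 (ContinuousLinearMap.inverse ∘ D) x₀ :=
    ((isInvertible_of_comp_eq_id hDE.self_of_nhds hED.self_of_nhds).contDiffAt_map_inverse
      (n := 1) |>.differentiableAt one_ne_zero).comp x₀ hD
  refine hinv.congr_of_eventuallyEq ?_
  filter_upwards [hDE, hED] with x h₁ h₂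
  exact (inverse_eq_of_comp_eq_id h₁ h₂).symm

theorem HasFDerivAt.of_eventually_apply_eq {D : X → U →L[𝕜] W} {D' : X →L[𝕜] U →L[𝕜] W}
    {S : X → U} {E₀ : W →L[𝕜] U} {f : W} {x₀ : X} (hD : HasFDerivAt D D' x₀)
    (hS : DifferentiableAt 𝕜 S x₀) (hDS : ∀ᶠ x in 𝓝 x₀, D x (S x) = f)
    (hE₀ : E₀.comp (D x₀) = .id 𝕜 U) :
    HasFDerivAt S (-(E₀.comp (D'.flip (S x₀)))) x₀ := by
  have hzero : (D x₀).comp (fderiv 𝕜 S x₀) + D'.flip (S x₀) = 0 :=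
    (hD.clm_apply hS.hasFDerivAt).unique ((hasFDerivAt_const f x₀).congr_of_eventuallyEq hDS)
  convert hS.hasFDerivAt using 1
  calc -(E₀.comp (D'.flip (S x₀)))
      = E₀.comp ((D x₀).comp (fderiv 𝕜 S x₀)) := by
        rw [eq_neg_of_add_eq_zero_right hzero, comp_neg, neg_neg]
    _ = fderiv 𝕜 S x₀ := by rw [← comp_assoc, hE₀, id_comp]

end

theorem statement0_general
    {X U W : Type*} [NormedAddCommGroup X] [NormedSpace ℂ X]
    [NormedAddCommGroup U] [NormedSpace ℂ U] [CompleteSpace U]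
    [NormedAddCommGroup W] [NormedSpace ℂ W]
    (K : U →L[ℂ] W) (B : U →L[ℂ] X →L[ℂ] W)
    (D : X → U →L[ℂ] W) (hD : ∀ θ u, D θ u = K u + B u θ)
    (f : W) (s : Set X) (hs : IsOpen s)
    (E : X → W →L[ℂ] U)
    (hE1 : ∀ θ ∈ s, (E θ).comp (D θ) = ContinuousLinearMap.id ℂ U)
    (hE2 : ∀ θ ∈ s, (D θ).comp (E θ) = ContinuousLinearMap.id ℂ W)
    (S : X → U) (hS : ∀ θ, S θ = E θ f)
    (θ₀ : X) (hθ₀ : θ₀ ∈ s) :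
    HasFDerivAt S (-((E θ₀).comp (B (S θ₀)))) θ₀ := by
  have hD_affine : D = fun θ => K + B.flip θ := by
    funext θ; ext u; simp [hD]
  have hD_deriv : HasFDerivAt D B.flip θ₀ := hD_affine ▸ B.flip.hasFDerivAt.const_add K
  have hs_nhds : ∀ᶠ θ in 𝓝 θ₀, θ ∈ s := hs.mem_nhds hθ₀
  have hS_diff : DifferentiableAt ℂ S θ₀ := by
    rw [funext hS]
    exact (hD_deriv.differentiableAt.of_eventually_comp_eq_id (hs_nhds.mono hE2)
      (hs_nhds.mono hE1)).clm_apply (differentiableAt_const f)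
  have hDS : ∀ᶠ θ in 𝓝 θ₀, D θ (S θ) = f := hs_nhds.mono fun θ hθ => by
    rw [hS, ← comp_apply, hE2 θ hθ, id_apply]
  exact hD_deriv.of_eventually_apply_eq hS_diff hDS (hE1 θ₀ hθ₀)

/-- Fréchet differentiability of the parameter-to-state map
`S θ = E θ f`, with derivative `h ↦ -E θ₀ ((B (S θ₀)) h)`. -/
theorem statement0
    {X U W : Type*} [NormedAddCommGroup X] [NormedSpace ℂ X]
    [NormedAddCommGroup U] [NormedSpace ℂ U] [CompleteSpace U]
    [NormedAddCommGroup W] [NormedSpace ℂ W] [CompleteSpace W]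
    (K : U →L[ℂ] W) (B : U →L[ℂ] X →L[ℂ] W)
    (D : X → U →L[ℂ] W) (hD : ∀ θ u, D θ u = K u + B u θ)
    (f : W) (s : Set X) (hs : IsOpen s)
    (E : X → W →L[ℂ] U)
    (hE1 : ∀ θ ∈ s, (E θ).comp (D θ) = ContinuousLinearMap.id ℂ U)
    (hE2 : ∀ θ ∈ s, (D θ).comp (E θ) = ContinuousLinearMap.id ℂ W)
    (S : X → U) (hS : ∀ θ, S θ = E θ f)
    (θ₀ : X) (hθ₀ : θ₀ ∈ s) :
    HasFDerivAt S (-((E θ₀).comp (B (S θ₀)))) θ₀ :=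
  statement0_general K B D hD f s hs E hE1 hE2 S hS θ₀ hθ₀
end

section
/- Let ι : U →L L²(μ, ℂ) be a continuous linear map, let s ⊆ X be an open set such that for every θ ∈ s there is a two-sided inverse E(θ) : W →L U of D(θ), let f₁, …, f_J ∈ W (J ≥ 1), and set u_j(θ) := E(θ) f_j. Fix θ₀ ∈ s, write u_j := u_j(θ₀), and for h ∈ X set φ_j(h) := −E(θ₀)((B u_j)h). Define the covariance kernel K(θ) := (1/J) Σ_{j=1}^{J} (ι u_j(θ)) ⊗ conj(ι u_j(θ)) and the linearization kernel T(h) := (1/J) Σ_{j=1}^{J} [ (ι u_j) ⊗ conj(ι φ_j(h)) + (ι φ_j(h)) ⊗ conj(ι u_j) ]. Then the parameter-to-covariance map is Fréchet differentiable at θ₀ in the little-o sense: ‖K(θ₀ + h) − K(θ₀) − T(h)‖_{L²(μ×μ)} / ‖h‖_X tends to 0 as h → 0, h ≠ 0. -/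
/-!
Near `θ₀` the solution operator factors as `E θ = (E θ₀ ∘ D θ)⁻¹ ∘ E θ₀`, where `E θ₀ ∘ D θ` is a
unit of the Banach algebra `U →L U` depending affinely on `θ`; differentiability of `Ring.inverse`
makes `θ ↦ u θ j` Fréchet differentiable with derivative `φ · j`. Writing `d = x - x₀` and
`r = x - x₀ - y`, the quadratic form `x ⊗ x̄` satisfies, a.e.,
`x ⊗ x̄ - x₀ ⊗ x̄₀ - (x₀ ⊗ ȳ + y ⊗ x̄₀) = d ⊗ d̄ + x₀ ⊗ r̄ + r ⊗ x̄₀`, and `‖f ⊗ ḡ‖ = ‖f‖ ‖g‖` in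
`L²(μ × μ)`. With `x = ι u (θ₀ + h) j` and `y = ι φ h j` this bounds the remainder by
`‖d‖² + 2 ‖x₀‖ ‖r‖ = o(‖h‖)`.
-/

open MeasureTheory Asymptotics Filter Topology ComplexConjugate
open scoped ENNReal

theorem hasFDerivAt_inverse_apply {𝕜 X U W : Type*} [NontriviallyNormedField 𝕜]
    [NormedAddCommGroup X] [NormedSpace 𝕜 X] [NormedAddCommGroup U] [NormedSpace 𝕜 U]
    [CompleteSpace U] [NormedAddCommGroup W] [NormedSpace 𝕜 W] {D : X → U →L[𝕜] W} {D' : X →L[𝕜] U →L[𝕜] W}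
    {E : X → W →L[𝕜] U} {θ₀ : X} (hD : HasFDerivAt D D' θ₀)
    (hE : ∀ᶠ θ in 𝓝 θ₀, (E θ).comp (D θ) = .id 𝕜 U ∧ (D θ).comp (E θ) = .id 𝕜 W) (w : W) :
    HasFDerivAt (fun θ => E θ w) (-(E θ₀).comp (D'.flip (E θ₀ w))) θ₀ := by
  obtain ⟨hE₀, hD₀⟩ := hE.self_of_nhds
  have hring : (fun θ => Ring.inverse ((E θ₀).comp (D θ)) (E θ₀ w)) =ᶠ[𝓝 θ₀]
      fun θ => E θ w := by
    filter_upwards [hE] with θ ⟨hEθ, hDθ⟩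
    let v : (U →L[𝕜] U)ˣ :=
      { val := (E θ₀).comp (D θ)
        inv := (E θ).comp (D θ₀)
        val_inv := by
          ext x
          simpa using congr((E θ₀) ($hDθ (D θ₀ x))).trans congr($hE₀ x)
        inv_val := by
          ext x
          simpa using congr((E θ) ($hD₀ (D θ x))).trans congr($hEθ x) }
    show Ring.inverse (v : U →L[𝕜] U) (E θ₀ w) = E θ w
    rw [Ring.inverse_unit]
    simpa [v] using congr(E θ ($hD₀ w))
  have hA : HasFDerivAt (fun θ => (E θ₀).comp (D θ))
      ((ContinuousLinearMap.compL 𝕜 U W U (E θ₀)).comp D') θ₀ := by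
    simpa using (hasFDerivAt_const (E θ₀) θ₀).clm_comp hD
  have hinv : HasFDerivAt Ring.inverse (-ContinuousLinearMap.mulLeftRight 𝕜 (U →L[𝕜] U) 1 1)
      ((E θ₀).comp (D θ₀)) := by
    simpa [hE₀, ← ContinuousLinearMap.one_def] using
      hasFDerivAt_ringInverse (𝕜 := 𝕜) (1 : (U →L[𝕜] U)ˣ)
  refine ((hinv.comp θ₀ hA).clm_apply (hasFDerivAt_const (E θ₀ w) θ₀)).congr_of_eventuallyEq
    hring.symm |>.congr_fderiv ?_
  ext h
  simp

theorem HasFDerivAt.isLittleO_norm_sub_sq {𝕜 E F : Type*} [NontriviallyNormedField 𝕜]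
    [NormedAddCommGroup E] [NormedSpace 𝕜 E] [NormedAddCommGroup F] [NormedSpace 𝕜 F]
    {f : E → F} {f' : E →L[𝕜] F} {x : E} (hf : HasFDerivAt f f' x) :
    (fun h => ‖f (x + h) - f x‖ ^ 2) =o[𝓝 0] fun h => h := by
  have hO : (fun h => f (x + h) - f x) =O[𝓝 0] fun h => h :=
    ((hasFDerivAt_iff_isLittleO_nhds_zero.1 hf).isBigO.add (f'.isBigO_id _)).congr_left
      fun h => sub_add_cancel _ _
  have ho : (fun h => f (x + h) - f x) =o[𝓝 0] fun _ => (1 : ℝ) :=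
    (isLittleO_one_iff ℝ).2 (hO.trans_tendsto tendsto_id)
  refine isLittleO_norm_right.1 ?_
  simpa only [sq, mul_one] using hO.norm_norm.mul_isLittleO ho.norm_left

namespace MeasureTheory

section TensorKernel

variable {𝕜 : Type*} [RCLike 𝕜] {α β : Type*} [MeasurableSpace α] [MeasurableSpace β]
  {μ : Measure α} {ν : Measure β}

def tensorKernel (f : α → 𝕜) (g : β → 𝕜) : α × β → 𝕜 := fun q => f q.1 * conj (g q.2)

theorem AEStronglyMeasurable.tensorKernel {f : α → 𝕜} {g : β → 𝕜}
    (hf : AEStronglyMeasurable f μ) (hg : AEStronglyMeasurable g ν) :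
    AEStronglyMeasurable (tensorKernel f g) (μ.prod ν) :=
  (hf.comp_quasiMeasurePreserving Measure.quasiMeasurePreserving_fst).mul
    (RCLike.continuous_conj.comp_aestronglyMeasurable
      (hg.comp_quasiMeasurePreserving Measure.quasiMeasurePreserving_snd))

theorem eLpNorm_tensorKernel [SFinite ν] {f : α → 𝕜} {g : β → 𝕜} {p : ℝ≥0∞}
    (hf : AEStronglyMeasurable f μ) (hg : AEStronglyMeasurable g ν) (hp0 : p ≠ 0) (hp : p ≠ ∞) :
    eLpNorm (tensorKernel f g) p (μ.prod ν) = eLpNorm f p μ * eLpNorm g p ν := by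
  simp only [eLpNorm_eq_lintegral_rpow_enorm_toReal hp0 hp, tensorKernel, enorm_mul,
    RCLike.enorm_conj, ENNReal.mul_rpow_of_nonneg _ _ ENNReal.toReal_nonneg]
  rw [lintegral_prod_mul (hf.enorm.pow_const _) (hg.enorm.pow_const _),
    ENNReal.mul_rpow_of_nonneg _ _ (by positivity)]

variable {p : ℝ≥0∞}

theorem Lp.eLpNorm_tensorKernel [Fact (1 ≤ p)] [SFinite ν] (hp : p ≠ ∞) (x : Lp 𝕜 p μ)
    (y : Lp 𝕜 p ν) :
    eLpNorm (tensorKernel x y) p (μ.prod ν) = ‖x‖ₑ * ‖y‖ₑ := by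
  rw [MeasureTheory.eLpNorm_tensorKernel (Lp.aestronglyMeasurable x) (Lp.aestronglyMeasurable y)
    (zero_lt_one.trans_le Fact.out).ne' hp, Lp.enorm_def, Lp.enorm_def]

theorem Lp.tensorKernel_sub_sub_ae_eq (x x₀ y : Lp 𝕜 p μ) :
    tensorKernel x x - tensorKernel x₀ x₀ - (tensorKernel x₀ y + tensorKernel y x₀)
      =ᵐ[μ.prod μ] tensorKernel (x - x₀) (x - x₀) + tensorKernel x₀ (x - x₀ - y)
        + tensorKernel (x - x₀ - y) x₀ := by
  have hd : ⇑(x - x₀) =ᵐ[μ] ⇑x - ⇑x₀ := Lp.coeFn_sub x x₀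
  have hr : ⇑(x - x₀ - y) =ᵐ[μ] ⇑x - ⇑x₀ - ⇑y :=
    (Lp.coeFn_sub _ _).trans (hd.sub EventuallyEq.rfl)
  filter_upwards [Measure.quasiMeasurePreserving_fst.ae_eq_comp hd,
    Measure.quasiMeasurePreserving_snd.ae_eq_comp hd,
    Measure.quasiMeasurePreserving_fst.ae_eq_comp hr,
    Measure.quasiMeasurePreserving_snd.ae_eq_comp hr] with q hd₁ hd₂ hr₁ hr₂
  simp only [Function.comp_apply, Pi.sub_apply] at hd₁ hd₂ hr₁ hr₂
  simp only [tensorKernel, Pi.sub_apply, Pi.add_apply, hd₁, hd₂, hr₁, hr₂, map_sub]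
  ring

theorem Lp.eLpNorm_tensorKernel_sub_sub_le [Fact (1 ≤ p)] [SFinite μ] (hp : p ≠ ∞)
    (x x₀ y : Lp 𝕜 p μ) :
    eLpNorm (tensorKernel x x - tensorKernel x₀ x₀ - (tensorKernel x₀ y + tensorKernel y x₀))
        p (μ.prod μ) ≤ ENNReal.ofReal (‖x - x₀‖ ^ 2 + 2 * ‖x₀‖ * ‖x - x₀ - y‖) := by
  have hmeas (f g : Lp 𝕜 p μ) : AEStronglyMeasurable (tensorKernel f g) (μ.prod μ) :=
    AEStronglyMeasurable.tensorKernel (Lp.aestronglyMeasurable f) (Lp.aestronglyMeasurable g)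
  have hp1 : 1 ≤ p := Fact.out
  rw [eLpNorm_congr_ae (Lp.tensorKernel_sub_sub_ae_eq x x₀ y)]
  calc _ ≤ eLpNorm (tensorKernel (x - x₀) (x - x₀)) p (μ.prod μ)
          + eLpNorm (tensorKernel x₀ (x - x₀ - y)) p (μ.prod μ)
          + eLpNorm (tensorKernel (x - x₀ - y) x₀) p (μ.prod μ) :=
        (eLpNorm_add_le ((hmeas _ _).add (hmeas _ _)) (hmeas _ _) hp1).trans
          (add_le_add_left (eLpNorm_add_le (hmeas _ _) (hmeas _ _) hp1) _)
    _ = ENNReal.ofReal (‖x - x₀‖ ^ 2 + 2 * ‖x₀‖ * ‖x - x₀ - y‖) := by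
        simp only [Lp.eLpNorm_tensorKernel hp, ← ofReal_norm]
        rw [← ENNReal.ofReal_mul (norm_nonneg _), ← ENNReal.ofReal_mul (norm_nonneg _),
          ← ENNReal.ofReal_mul (norm_nonneg _), ← ENNReal.ofReal_add (by positivity)
            (by positivity), ← ENNReal.ofReal_add (by positivity) (by positivity)]
        congr 1
        ring

end TensorKernel

section Covariance

variable {𝕜 : Type*} [RCLike 𝕜] {α : Type*} {n : ℕ}

def covarianceKernel (x : Fin n → α → 𝕜) : α × α → 𝕜 :=
  fun q => (1 / n : 𝕜) * ∑ j, tensorKernel (x j) (x j) q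

def linearizedCovarianceKernel (x y : Fin n → α → 𝕜) : α × α → 𝕜 :=
  fun q => (1 / n : 𝕜) * ∑ j, (tensorKernel (x j) (y j) q + tensorKernel (y j) (x j) q)

theorem covarianceKernel_sub_sub (x x₀ y : Fin n → α → 𝕜) :
    covarianceKernel x - covarianceKernel x₀ - linearizedCovarianceKernel x₀ y
      = (1 / n : 𝕜) • ∑ j, (tensorKernel (x j) (x j) - tensorKernel (x₀ j) (x₀ j)
          - (tensorKernel (x₀ j) (y j) + tensorKernel (y j) (x₀ j))) := by
  funext q
  simp only [covarianceKernel, linearizedCovarianceKernel, Pi.sub_apply, Pi.smul_apply,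
    Finset.sum_apply, Pi.add_apply, smul_eq_mul, ← mul_sub, ← Finset.sum_sub_distrib]

variable [MeasurableSpace α] {μ : Measure α} {p : ℝ≥0∞} [Fact (1 ≤ p)] [SFinite μ]

theorem eLpNorm_covarianceKernel_sub_sub_le (hp : p ≠ ∞) (x x₀ y : Fin n → Lp 𝕜 p μ) :
    eLpNorm (covarianceKernel (fun j => x j) - covarianceKernel (fun j => x₀ j)
        - linearizedCovarianceKernel (fun j => x₀ j) (fun j => y j)) p (μ.prod μ)
      ≤ ENNReal.ofReal
          (‖(1 / n : 𝕜)‖ * ∑ j, (‖x j - x₀ j‖ ^ 2 + 2 * ‖x₀ j‖ * ‖x j - x₀ j - y j‖)) := by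
  have hmeas (f g : Lp 𝕜 p μ) : AEStronglyMeasurable (tensorKernel f g) (μ.prod μ) :=
    AEStronglyMeasurable.tensorKernel (Lp.aestronglyMeasurable f) (Lp.aestronglyMeasurable g)
  rw [covarianceKernel_sub_sub, ENNReal.ofReal_mul (norm_nonneg _), ofReal_norm,
    ENNReal.ofReal_sum_of_nonneg fun j _ => by positivity]
  refine eLpNorm_const_smul_le.trans (mul_le_mul_right ?_ _)
  refine (eLpNorm_sum_le (fun j _ => ?_) Fact.out).trans
    (Finset.sum_le_sum fun j _ => Lp.eLpNorm_tensorKernel_sub_sub_le hp _ _ _)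
  exact ((hmeas _ _).sub (hmeas _ _)).sub ((hmeas _ _).add (hmeas _ _))

theorem isLittleO_covarianceKernel_sub_sub (hp : p ≠ ∞) {X : Type*} [NormedAddCommGroup X]
    [NormedSpace 𝕜 X] {a : X → Fin n → Lp 𝕜 p μ} {a' : Fin n → X →L[𝕜] Lp 𝕜 p μ} {θ₀ : X}
    (ha : ∀ j, HasFDerivAt (fun θ => a θ j) (a' j) θ₀) :
    (fun h => (eLpNorm (covarianceKernel (fun j => a (θ₀ + h) j)
        - covarianceKernel (fun j => a θ₀ j)
        - linearizedCovarianceKernel (fun j => a θ₀ j) (fun j => a' j h)) p (μ.prod μ)).toReal)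
      =o[𝓝 0] fun h => h := by
  have hbound : (fun h => ‖(1 / n : 𝕜)‖ * ∑ j, (‖a (θ₀ + h) j - a θ₀ j‖ ^ 2
      + 2 * ‖a θ₀ j‖ * ‖a (θ₀ + h) j - a θ₀ j - a' j h‖)) =o[𝓝 0] fun h => h := by
    refine IsLittleO.const_mul_left (IsLittleO.fun_sum fun j _ => ?_) _
    exact (ha j).isLittleO_norm_sub_sq.add
      ((hasFDerivAt_iff_isLittleO_nhds_zero.1 (ha j)).norm_left.const_mul_left _)
  refine (isBigO_of_le _ fun h => ?_).trans_isLittleO hbound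
  rw [Real.norm_of_nonneg ENNReal.toReal_nonneg, Real.norm_of_nonneg (by positivity)]
  exact ENNReal.toReal_le_of_le_ofReal (by positivity)
    (eLpNorm_covarianceKernel_sub_sub_le hp _ _ _)

end Covariance

end MeasureTheory

theorem statement10_general
    {Ω : Type*} [MeasurableSpace Ω] (μ : Measure Ω) [SigmaFinite μ]
    {X U W : Type*} [NormedAddCommGroup X] [NormedSpace ℂ X]
    [NormedAddCommGroup U] [NormedSpace ℂ U] [CompleteSpace U]
    [NormedAddCommGroup W] [NormedSpace ℂ W]
    (K : U →L[ℂ] W) (B : U →L[ℂ] X →L[ℂ] W)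
    (D : X → U →L[ℂ] W) (hD : ∀ θ u, D θ u = K u + B u θ)
    (ι : U →L[ℂ] Lp ℂ 2 μ)
    (s : Set X) (hs : IsOpen s)
    (E : X → W →L[ℂ] U)
    (hE1 : ∀ θ ∈ s, (E θ).comp (D θ) = ContinuousLinearMap.id ℂ U)
    (hE2 : ∀ θ ∈ s, (D θ).comp (E θ) = ContinuousLinearMap.id ℂ W)
    (J : ℕ) (f : Fin J → W)
    (u : X → Fin J → U) (hu : ∀ θ j, u θ j = E θ (f j))
    (θ₀ : X) (hθ₀ : θ₀ ∈ s)
    (φ : X → Fin J → U) (hφ : ∀ h j, φ h j = -(E θ₀ ((B (u θ₀ j)) h)))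
    (Kker : X → Ω × Ω → ℂ)
    (hK : ∀ θ p, Kker θ p
        = (1 / (J : ℂ)) * ∑ j, ι (u θ j) p.1 * conj (ι (u θ j) p.2))
    (Tker : X → Ω × Ω → ℂ)
    (hT : ∀ h p, Tker h p = (1 / (J : ℂ)) * ∑ j,
        (ι (u θ₀ j) p.1 * conj (ι (φ h j) p.2)
          + ι (φ h j) p.1 * conj (ι (u θ₀ j) p.2))) :
    Filter.Tendsto
      (fun h : X =>
        (eLpNorm (fun p : Ω × Ω => Kker (θ₀ + h) p - Kker θ₀ p - Tker h p)
            2 (μ.prod μ)).toReal / ‖h‖)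
      (nhdsWithin 0 {0}ᶜ) (nhds 0) := by
  have hDderiv : HasFDerivAt D B.flip θ₀ := by
    have hDfun : D = fun θ => K + B.flip θ := by
      funext θ
      ext v
      simp [hD]
    exact hDfun ▸ B.flip.hasFDerivAt.const_add K
  have hinv : ∀ᶠ θ in 𝓝 θ₀, (E θ).comp (D θ) = .id ℂ U ∧ (D θ).comp (E θ) = .id ℂ W :=
    eventually_of_mem (hs.mem_nhds hθ₀) fun θ hθ => ⟨hE1 θ hθ, hE2 θ hθ⟩
  have hsol (j : Fin J) : HasFDerivAt (fun θ => u θ j) (-(E θ₀).comp (B (u θ₀ j))) θ₀ := by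
    simpa [hu] using hasFDerivAt_inverse_apply hDderiv hinv (f j)
  have hφ' (h : X) (j : Fin J) : (ι.comp (-(E θ₀).comp (B (u θ₀ j)))) h = ι (φ h j) := by
    simp [hφ]
  have hrem := isLittleO_covarianceKernel_sub_sub ENNReal.ofNat_ne_top
    fun j => ι.hasFDerivAt.comp θ₀ (hsol j)
  simp only [hφ'] at hrem
  have hKer (θ : X) : Kker θ = covarianceKernel fun j => ι (u θ j) := funext (hK θ)
  have hTer (h : X) : Tker h = linearizedCovarianceKernel (fun j => ι (u θ₀ j))
      fun j => ι (φ h j) := funext (hT h)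
  simp only [hKer, hTer]
  exact hrem.norm_right.tendsto_div_nhds_zero.mono_left nhdsWithin_le_nhds

/-- Fréchet differentiability (in the little-o sense, with the
`L²(μ × μ)` kernel norm) of the parameter-to-covariance map at `θ₀`. -/
theorem statement10
    {Ω : Type*} [MeasurableSpace Ω] (μ : Measure Ω) [SigmaFinite μ]
    {X U W : Type*} [NormedAddCommGroup X] [NormedSpace ℂ X]
    [NormedAddCommGroup U] [NormedSpace ℂ U] [CompleteSpace U]
    [NormedAddCommGroup W] [NormedSpace ℂ W] [CompleteSpace W]
    (K : U →L[ℂ] W) (B : U →L[ℂ] X →L[ℂ] W)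
    (D : X → U →L[ℂ] W) (hD : ∀ θ u, D θ u = K u + B u θ)
    (ι : U →L[ℂ] Lp ℂ 2 μ)
    (s : Set X) (hs : IsOpen s)
    (E : X → W →L[ℂ] U)
    (hE1 : ∀ θ ∈ s, (E θ).comp (D θ) = ContinuousLinearMap.id ℂ U)
    (hE2 : ∀ θ ∈ s, (D θ).comp (E θ) = ContinuousLinearMap.id ℂ W)
    (J : ℕ) (hJ : 1 ≤ J) (f : Fin J → W)
    (u : X → Fin J → U) (hu : ∀ θ j, u θ j = E θ (f j))
    (θ₀ : X) (hθ₀ : θ₀ ∈ s)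
    (φ : X → Fin J → U) (hφ : ∀ h j, φ h j = -(E θ₀ ((B (u θ₀ j)) h)))
    (Kker : X → Ω × Ω → ℂ)
    (hK : ∀ θ p, Kker θ p
        = (1 / (J : ℂ)) * ∑ j, ι (u θ j) p.1 * conj (ι (u θ j) p.2))
    (Tker : X → Ω × Ω → ℂ)
    (hT : ∀ h p, Tker h p = (1 / (J : ℂ)) * ∑ j,
        (ι (u θ₀ j) p.1 * conj (ι (φ h j) p.2)
          + ι (φ h j) p.1 * conj (ι (u θ₀ j) p.2))) :
    Filter.Tendsto
      (fun h : X =>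
        (eLpNorm (fun p : Ω × Ω => Kker (θ₀ + h) p - Kker θ₀ p - Tker h p)
            2 (μ.prod μ)).toReal / ‖h‖)
      (nhdsWithin 0 {0}ᶜ) (nhds 0) :=
  statement10_general μ K B D hD ι s hs E hE1 hE2 J f u hu θ₀ hθ₀ φ hφ Kker hK Tker hT
end

section
/- Let ι : U →L L²(μ, ℂ) be a continuous linear map, let θ, θ̃ ∈ X, and let E, Ẽ : W →L U be two-sided inverses of D(θ) and D(θ̃) with ‖E‖ ≤ M₁ and ‖Ẽ‖ ≤ M₂. Let f₁, …, f_J ∈ W (J ≥ 1) and set u_j := E f_j and v_j := Ẽ f_j. Then the cross-covariance kernel satisfies ‖(1/J) Σ_{j=1}^{J} (ι(v_j − u_j)) ⊗ conj(ι u_j)‖_{L²(μ×μ)} ≤ ‖ι‖² · ‖B‖ · M₁² · M₂ · ((1/J) Σ_{j=1}^{J} ‖f_j‖²_W) · ‖θ − θ̃‖_X. -/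
/-!
Subtracting the two inverses gives the second resolvent identity
`Ẽ f - E f = Ẽ (D θ - D θ̃) E f = Ẽ (B (E f) (θ - θ̃))`, so `‖v_j - u_j‖ ≤ M₂ ‖B‖ M₁ ‖f_j‖ ‖θ - θ̃‖`,
while `‖u_j‖ ≤ M₁ ‖f_j‖`. By Tonelli the `L²(μ × μ)` norm of a tensor kernel `g ⊗ h̄` is `‖g‖ ‖h‖`,
and the triangle inequality bounds the averaged kernel by the average of these products.
-/

open MeasureTheory ComplexConjugate
open scoped ENNReal

section TensorKernel

variable {α β : Type*} [MeasurableSpace α] [MeasurableSpace β] {μ : Measure α} {ν : Measure β}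

theorem eLpNorm_mul_prod [SFinite ν] {𝕜 : Type*} [NormedDivisionRing 𝕜] {f : α → 𝕜} {g : β → 𝕜}
    (hf : AEStronglyMeasurable f μ) (hg : AEStronglyMeasurable g ν) {p : ℝ≥0∞} (hp0 : p ≠ 0)
    (hp : p ≠ ∞) :
    eLpNorm (fun z : α × β => f z.1 * g z.2) p (μ.prod ν) = eLpNorm f p μ * eLpNorm g p ν := by
  have hp' : 0 ≤ p.toReal := ENNReal.toReal_nonneg
  simp only [eLpNorm_eq_lintegral_rpow_enorm_toReal hp0 hp, enorm_mul,
    ENNReal.mul_rpow_of_nonneg _ _ hp']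
  rw [lintegral_prod_mul (hf.enorm.pow_const _) (hg.enorm.pow_const _),
    ENNReal.mul_rpow_of_nonneg _ _ (by positivity)]

variable {𝕜 : Type*} [RCLike 𝕜] {p : ℝ≥0∞}

theorem Lp.eLpNorm_mul_conj_prod [SFinite ν] (hp0 : p ≠ 0) (hp : p ≠ ∞) (g : Lp 𝕜 p μ)
    (h : Lp 𝕜 p ν) :
    eLpNorm (fun z : α × β => g z.1 * conj (h z.2)) p (μ.prod ν) = ‖g‖ₑ * ‖h‖ₑ := by
  rw [Lp.enorm_def, Lp.enorm_def, ← eLpNorm_star (f := (h : β → 𝕜))]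
  exact eLpNorm_mul_prod (Lp.aestronglyMeasurable g) (Lp.aestronglyMeasurable h).star hp0 hp

theorem eLpNorm_mul_sum_mul_conj_prod_le [SFinite ν] [Fact (1 ≤ p)] (hp : p ≠ ∞) {ι : Type*}
    (c : 𝕜) (s : Finset ι) (g : ι → Lp 𝕜 p μ) (h : ι → Lp 𝕜 p ν) :
    eLpNorm (fun z : α × β => c * ∑ j ∈ s, g j z.1 * conj (h j z.2)) p (μ.prod ν)
      ≤ ENNReal.ofReal (‖c‖ * ∑ j ∈ s, ‖g j‖ * ‖h j‖) := by
  have hp0 : p ≠ 0 := (zero_lt_one.trans_le Fact.out).ne'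
  have hfun : (fun z : α × β => c * ∑ j ∈ s, g j z.1 * conj (h j z.2))
      = c • ∑ j ∈ s, fun z : α × β => g j z.1 * conj (h j z.2) := by
    ext z; simp
  have hmeas : ∀ j ∈ s, AEStronglyMeasurable (fun z : α × β => g j z.1 * conj (h j z.2))
      (μ.prod ν) := fun j _ =>
    (Lp.aestronglyMeasurable (g j)).comp_fst.mul (Lp.aestronglyMeasurable (h j)).comp_snd.star
  calc _ = ‖c‖ₑ * eLpNorm (∑ j ∈ s, fun z : α × β => g j z.1 * conj (h j z.2)) p (μ.prod ν) := by
        rw [hfun, eLpNorm_const_smul]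
    _ ≤ ‖c‖ₑ * ∑ j ∈ s, ‖g j‖ₑ * ‖h j‖ₑ := by
        gcongr
        refine (eLpNorm_sum_le hmeas Fact.out).trans_eq ?_
        simp only [Lp.eLpNorm_mul_conj_prod hp0 hp]
    _ = _ := by
        simp only [← ofReal_norm, ← ENNReal.ofReal_mul (norm_nonneg _)]
        rw [← ENNReal.ofReal_sum_of_nonneg fun _ _ => by positivity,
          ← ENNReal.ofReal_mul (norm_nonneg _)]

end TensorKernel

section InversePerturbation

theorem ContinuousLinearMap.apply_sub_apply_eq_of_comp_eq_id {R U W : Type*} [Ring R]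
    [TopologicalSpace U] [AddCommGroup U] [Module R U]
    [TopologicalSpace W] [AddCommGroup W] [Module R W]
    {A A' : U →L[R] W} {E E' : W →L[R] U}
    (hE : A.comp E = .id R W) (hE' : E'.comp A' = .id R U) (f : W) :
    E' f - E f = E' (A (E f) - A' (E f)) := by
  have hAE : A (E f) = f := DFunLike.congr_fun hE f
  have hE'A' : E' (A' (E f)) = E f := DFunLike.congr_fun hE' (E f)
  rw [map_sub, hAE, hE'A']

variable {𝕜 X U W : Type*} [NontriviallyNormedField 𝕜]
  [SeminormedAddCommGroup X] [NormedSpace 𝕜 X] [SeminormedAddCommGroup U] [NormedSpace 𝕜 U]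
  [SeminormedAddCommGroup W] [NormedSpace 𝕜 W]

theorem norm_inverse_sub_inverse_apply_le {K : U →L[𝕜] W} {B : U →L[𝕜] X →L[𝕜] W}
    {D : X → U →L[𝕜] W} (hD : ∀ θ u, D θ u = K u + B u θ) {θ θ' : X} {E E' : W →L[𝕜] U}
    (hE : (D θ).comp E = .id 𝕜 W) (hE' : E'.comp (D θ') = .id 𝕜 U) (f : W) :
    ‖E' f - E f‖ ≤ ‖E'‖ * ‖B‖ * ‖E‖ * ‖f‖ * ‖θ - θ'‖ := by
  have hdiff : D θ (E f) - D θ' (E f) = B (E f) (θ - θ') := by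
    rw [hD, hD, map_sub]; abel
  rw [ContinuousLinearMap.apply_sub_apply_eq_of_comp_eq_id hE hE' f, hdiff]
  calc ‖E' (B (E f) (θ - θ'))‖ ≤ ‖E'‖ * (‖B‖ * (‖E‖ * ‖f‖) * ‖θ - θ'‖) :=
        E'.le_of_opNorm_le_of_le le_rfl (B.le_of_opNorm₂_le_of_le le_rfl (E.le_opNorm f) le_rfl)
    _ = _ := by ring

end InversePerturbation

theorem statement12_general
    {Ω : Type*} [MeasurableSpace Ω] (μ : Measure Ω) [SigmaFinite μ]
    {X U W : Type*} [NormedAddCommGroup X] [NormedSpace ℂ X]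
    [NormedAddCommGroup U] [NormedSpace ℂ U]
    [NormedAddCommGroup W] [NormedSpace ℂ W]
    (K : U →L[ℂ] W) (B : U →L[ℂ] X →L[ℂ] W)
    (D : X → U →L[ℂ] W) (hD : ∀ θ u, D θ u = K u + B u θ)
    (ι : U →L[ℂ] Lp ℂ 2 μ)
    (θ θ' : X) (E E' : W →L[ℂ] U)
    (hE2 : (D θ).comp E = ContinuousLinearMap.id ℂ W)
    (hE1' : E'.comp (D θ') = ContinuousLinearMap.id ℂ U)
    (M₁ M₂ : ℝ) (hM1 : ‖E‖ ≤ M₁) (hM2 : ‖E'‖ ≤ M₂)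
    (J : ℕ) (f : Fin J → W)
    (u v : Fin J → U) (hu : ∀ j, u j = E (f j)) (hv : ∀ j, v j = E' (f j)) :
    eLpNorm (fun p : Ω × Ω =>
        (1 / (J : ℂ)) * ∑ j, ι (v j - u j) p.1 * conj (ι (u j) p.2))
      2 (μ.prod μ)
    ≤ ENNReal.ofReal (‖ι‖ ^ 2 * ‖B‖ * M₁ ^ 2 * M₂
        * ((1 / (J : ℝ)) * ∑ j, ‖f j‖ ^ 2) * ‖θ - θ'‖) := by
  have hM₁ : 0 ≤ M₁ := (norm_nonneg _).trans hM1
  have hterm : ∀ j, ‖ι (v j - u j)‖ * ‖ι (u j)‖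
      ≤ ‖ι‖ ^ 2 * ‖B‖ * M₁ ^ 2 * M₂ * ‖θ - θ'‖ * ‖f j‖ ^ 2 := by
    intro j
    have hu_le : ‖u j‖ ≤ M₁ * ‖f j‖ := hu j ▸ E.le_of_opNorm_le hM1 _
    have hvu_le : ‖v j - u j‖ ≤ M₂ * ‖B‖ * M₁ * ‖f j‖ * ‖θ - θ'‖ := by
      rw [hu, hv]
      grw [norm_inverse_sub_inverse_apply_le hD hE2 hE1', hM1, hM2]
    have hιvu := ι.le_of_opNorm_le_of_le le_rfl hvu_le
    calc _ ≤ (‖ι‖ * (M₂ * ‖B‖ * M₁ * ‖f j‖ * ‖θ - θ'‖)) * (‖ι‖ * (M₁ * ‖f j‖)) :=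
          mul_le_mul hιvu (ι.le_of_opNorm_le_of_le le_rfl hu_le) (norm_nonneg _)
            ((norm_nonneg _).trans hιvu)
      _ = _ := by ring
  calc _ ≤ ENNReal.ofReal (‖(1 / (J : ℂ))‖ * ∑ j, ‖ι (v j - u j)‖ * ‖ι (u j)‖) :=
        eLpNorm_mul_sum_mul_conj_prod_le ENNReal.ofNat_ne_top _ _ _ _
    _ ≤ _ := by
        gcongr ENNReal.ofReal ?_
        calc _ ≤ 1 / (J : ℝ) * ∑ j, ‖ι‖ ^ 2 * ‖B‖ * M₁ ^ 2 * M₂ * ‖θ - θ'‖ * ‖f j‖ ^ 2 := by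
              rw [norm_div, norm_one, Complex.norm_natCast]
              exact mul_le_mul_of_nonneg_left (Finset.sum_le_sum fun j _ => hterm j)
                (by positivity)
          _ = _ := by rw [← Finset.mul_sum]; ring

/-- boundedness of the cross-covariance term
`cov(v - u, u)` in `L²(μ × μ)`, linear in `‖θ - θ̃‖`. -/
theorem statement12
    {Ω : Type*} [MeasurableSpace Ω] (μ : Measure Ω) [SigmaFinite μ]
    {X U W : Type*} [NormedAddCommGroup X] [NormedSpace ℂ X]
    [NormedAddCommGroup U] [NormedSpace ℂ U] [CompleteSpace U]
    [NormedAddCommGroup W] [NormedSpace ℂ W] [CompleteSpace W]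
    (K : U →L[ℂ] W) (B : U →L[ℂ] X →L[ℂ] W)
    (D : X → U →L[ℂ] W) (hD : ∀ θ u, D θ u = K u + B u θ)
    (ι : U →L[ℂ] Lp ℂ 2 μ)
    (θ θ' : X) (E E' : W →L[ℂ] U)
    (hE1 : E.comp (D θ) = ContinuousLinearMap.id ℂ U)
    (hE2 : (D θ).comp E = ContinuousLinearMap.id ℂ W)
    (hE1' : E'.comp (D θ') = ContinuousLinearMap.id ℂ U)
    (hE2' : (D θ').comp E' = ContinuousLinearMap.id ℂ W)
    (M₁ M₂ : ℝ) (hM1 : ‖E‖ ≤ M₁) (hM2 : ‖E'‖ ≤ M₂)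
    (J : ℕ) (hJ : 1 ≤ J) (f : Fin J → W)
    (u v : Fin J → U) (hu : ∀ j, u j = E (f j)) (hv : ∀ j, v j = E' (f j)) :
    eLpNorm (fun p : Ω × Ω =>
        (1 / (J : ℂ)) * ∑ j, ι (v j - u j) p.1 * conj (ι (u j) p.2))
      2 (μ.prod μ)
    ≤ ENNReal.ofReal (‖ι‖ ^ 2 * ‖B‖ * M₁ ^ 2 * M₂
        * ((1 / (J : ℝ)) * ∑ j, ‖f j‖ ^ 2) * ‖θ - θ'‖) :=
  statement12_general μ K B D hD ι θ θ' E E' hE2 hE1' M₁ M₂ hM1 hM2 J f u v hu hv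
end

section
/- Let ι : U →L L²(μ, ℂ) be a continuous linear map, let θ, θ̃ ∈ X, and let E, Ẽ : W →L U be two-sided inverses of D(θ) and D(θ̃) with ‖E‖ ≤ M₁ and ‖Ẽ‖ ≤ M₂. Let f₁, …, f_J ∈ W (J ≥ 1), set u_j := E f_j, v_j := Ẽ f_j, and φ_j := −E((B u_j)(θ − θ̃)). Then the first-variable part of the covariance linearization error satisfies the quadratic bound ‖(1/J) Σ_{j=1}^{J} (ι((u_j − v_j) − φ_j)) ⊗ conj(ι u_j)‖_{L²(μ×μ)} ≤ ‖ι‖² · ‖B‖² · M₁³ · M₂ · ((1/J) Σ_{j=1}^{J} ‖f_j‖²_W) · ‖θ − θ̃‖²_X. -/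
open MeasureTheory ComplexConjugate
open scoped ENNReal

/-!
The resolvent identity `E - Ẽ = E (D θ̃ - D θ) Ẽ`, with `D θ̃ - D θ = -(B ·) (θ - θ̃)` for the
affine model, shows that `φ_j` is the first-order part of `u_j - v_j`; applying the identity a
second time writes the remainder as `-E (B (E (B v_j (θ - θ̃))) (θ - θ̃))`, which is quadratic in
`θ - θ̃`. By Tonelli the `L²` norm of a tensor kernel `g ⊗ h̄` is `‖g‖ ‖h‖`, so the triangle
inequality bounds the averaged kernel term by term.
-/

theorem eLpNorm_prod_mul_conj {𝕜 α β : Type*} [RCLike 𝕜] [MeasurableSpace α] [MeasurableSpace β]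
    {μ : Measure α} {ν : Measure β} [SFinite ν] {f : α → 𝕜} {g : β → 𝕜}
    (hf : AEStronglyMeasurable f μ) (hg : AEStronglyMeasurable g ν)
    {p : ℝ≥0∞} (hp0 : p ≠ 0) (hp : p ≠ ∞) :
    eLpNorm (fun z : α × β => f z.1 * conj (g z.2)) p (μ.prod ν)
      = eLpNorm f p μ * eLpNorm g p ν := by
  simp only [eLpNorm_eq_lintegral_rpow_enorm_toReal hp0 hp, enorm_mul, RCLike.enorm_conj,
    ENNReal.mul_rpow_of_nonneg _ _ ENNReal.toReal_nonneg]
  rw [lintegral_prod_mul (f := fun x => ‖f x‖ₑ ^ p.toReal) (g := fun y => ‖g y‖ₑ ^ p.toReal)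
    (by fun_prop) (by fun_prop), ENNReal.mul_rpow_of_nonneg _ _ (by positivity)]

theorem eLpNorm_smul_sum_prod_mul_conj_le {𝕜 α β ι : Type*} [RCLike 𝕜] [MeasurableSpace α]
    [MeasurableSpace β] {μ : Measure α} {ν : Measure β} [SFinite ν]
    {p : ℝ≥0∞} [Fact (1 ≤ p)] (hp : p ≠ ∞)
    (s : Finset ι) (c : 𝕜) (a : ι → Lp 𝕜 p μ) (b : ι → Lp 𝕜 p ν) :
    eLpNorm (fun z : α × β => c * ∑ j ∈ s, a j z.1 * conj (b j z.2)) p (μ.prod ν)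
      ≤ ENNReal.ofReal (‖c‖ * ∑ j ∈ s, ‖a j‖ * ‖b j‖) := by
  have hp1 : 1 ≤ p := Fact.out
  have hfun : (fun z : α × β => c * ∑ j ∈ s, a j z.1 * conj (b j z.2))
      = c • ∑ j ∈ s, fun z : α × β => a j z.1 * conj (b j z.2) := by
    ext z
    simp only [Pi.smul_apply, Finset.sum_apply, smul_eq_mul]
  have hmeas : ∀ j ∈ s, AEStronglyMeasurable (fun z : α × β => a j z.1 * conj (b j z.2))
      (μ.prod ν) := fun j _ =>
    (Lp.aestronglyMeasurable (a j)).comp_fst.mul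
      (Lp.aestronglyMeasurable (b j)).comp_snd.star
  rw [hfun, eLpNorm_const_smul]
  calc ‖c‖ₑ * eLpNorm (∑ j ∈ s, fun z : α × β => a j z.1 * conj (b j z.2)) p (μ.prod ν)
      ≤ ‖c‖ₑ * ∑ j ∈ s, eLpNorm (fun z : α × β => a j z.1 * conj (b j z.2)) p (μ.prod ν) := by
        gcongr
        exact eLpNorm_sum_le hmeas hp1
    _ = ENNReal.ofReal (‖c‖ * ∑ j ∈ s, ‖a j‖ * ‖b j‖) := by
        rw [Finset.sum_congr rfl fun j _ => eLpNorm_prod_mul_conj (Lp.aestronglyMeasurable (a j))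
          (Lp.aestronglyMeasurable (b j)) (zero_lt_one.trans_le hp1).ne' hp]
        simp only [← Lp.enorm_def]
        rw [ENNReal.ofReal_mul (norm_nonneg _),
          ENNReal.ofReal_sum_of_nonneg fun j _ => by positivity]
        simp only [ENNReal.ofReal_mul (norm_nonneg _), ofReal_norm]

section AffineModel

variable {𝕜 X U W : Type*} [NontriviallyNormedField 𝕜]
  [NormedAddCommGroup X] [NormedSpace 𝕜 X] [NormedAddCommGroup U] [NormedSpace 𝕜 U]
  [NormedAddCommGroup W] [NormedSpace 𝕜 W]

theorem ContinuousLinearMap.sub_apply_eq_of_comp_eq_id {A A' : U →L[𝕜] W} {E E' : W →L[𝕜] U}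
    (hE : E.comp A = .id 𝕜 U) (hE' : A'.comp E' = .id 𝕜 W) (y : W) :
    E y - E' y = E (A' (E' y) - A (E' y)) := by
  have hA' : A' (E' y) = y := DFunLike.congr_fun hE' y
  have hA : E (A (E' y)) = E' y := DFunLike.congr_fun hE (E' y)
  rw [map_sub, hA', hA]

variable {K : U →L[𝕜] W} {B : U →L[𝕜] X →L[𝕜] W} {D : X → U →L[𝕜] W}
  {θ θ' : X} {E E' : W →L[𝕜] U}

theorem sub_apply_eq_neg_of_affine (hD : ∀ θ u, D θ u = K u + B u θ) (x : U) :
    D θ' x - D θ x = -B x (θ - θ') := by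
  rw [hD, hD, map_sub]
  abel

theorem linearization_remainder_eq (hD : ∀ θ u, D θ u = K u + B u θ)
    (hE : E.comp (D θ) = .id 𝕜 U) (hE' : (D θ').comp E' = .id 𝕜 W) (y : W) :
    (E y - E' y) + E (B (E y) (θ - θ')) = -E (B (E (B (E' y) (θ - θ'))) (θ - θ')) := by
  have hdiff : E y - E' y = -E (B (E' y) (θ - θ')) := by
    rw [ContinuousLinearMap.sub_apply_eq_of_comp_eq_id hE hE', sub_apply_eq_neg_of_affine hD,
      map_neg]
  calc (E y - E' y) + E (B (E y) (θ - θ'))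
      = E (B (E y) (θ - θ')) - E (B (E' y) (θ - θ')) := by rw [hdiff]; abel
    _ = E (B (E y - E' y) (θ - θ')) := by rw [map_sub B, sub_apply, map_sub E]
    _ = -E (B (E (B (E' y) (θ - θ'))) (θ - θ')) := by rw [hdiff, map_neg B, neg_apply, map_neg E]

theorem norm_linearization_remainder_le (hD : ∀ θ u, D θ u = K u + B u θ)
    (hE : E.comp (D θ) = .id 𝕜 U) (hE' : (D θ').comp E' = .id 𝕜 W) (y : W) :
    ‖(E y - E' y) + E (B (E y) (θ - θ'))‖
      ≤ ‖E‖ ^ 2 * ‖E'‖ * ‖B‖ ^ 2 * ‖θ - θ'‖ ^ 2 * ‖y‖ := by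
  have hEB : ∀ x, ‖E (B x (θ - θ'))‖ ≤ ‖E‖ * ‖B‖ * ‖θ - θ'‖ * ‖x‖ := fun x =>
    calc ‖E (B x (θ - θ'))‖ ≤ ‖E‖ * ‖B x (θ - θ')‖ := E.le_opNorm _
      _ ≤ ‖E‖ * (‖B‖ * ‖x‖ * ‖θ - θ'‖) := by gcongr; exact B.le_opNorm₂ x _
      _ = ‖E‖ * ‖B‖ * ‖θ - θ'‖ * ‖x‖ := by ring
  rw [linearization_remainder_eq hD hE hE' y, norm_neg]
  calc ‖E (B (E (B (E' y) (θ - θ'))) (θ - θ'))‖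
      ≤ ‖E‖ * ‖B‖ * ‖θ - θ'‖ * (‖E‖ * ‖B‖ * ‖θ - θ'‖ * ‖E' y‖) := by
        grw [hEB, hEB]
    _ ≤ ‖E‖ * ‖B‖ * ‖θ - θ'‖ * (‖E‖ * ‖B‖ * ‖θ - θ'‖ * (‖E'‖ * ‖y‖)) := by
        grw [E'.le_opNorm y]
    _ = ‖E‖ ^ 2 * ‖E'‖ * ‖B‖ ^ 2 * ‖θ - θ'‖ ^ 2 * ‖y‖ := by ring

end AffineModel

theorem statement13_general
    {Ω : Type*} [MeasurableSpace Ω] (μ : Measure Ω) [SigmaFinite μ]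
    {X U W : Type*} [NormedAddCommGroup X] [NormedSpace ℂ X]
    [NormedAddCommGroup U] [NormedSpace ℂ U]
    [NormedAddCommGroup W] [NormedSpace ℂ W]
    (K : U →L[ℂ] W) (B : U →L[ℂ] X →L[ℂ] W)
    (D : X → U →L[ℂ] W) (hD : ∀ θ u, D θ u = K u + B u θ)
    (ι : U →L[ℂ] Lp ℂ 2 μ)
    (θ θ' : X) (E E' : W →L[ℂ] U)
    (hE1 : E.comp (D θ) = ContinuousLinearMap.id ℂ U)
    (hE2' : (D θ').comp E' = ContinuousLinearMap.id ℂ W)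
    (M₁ M₂ : ℝ) (hM1 : ‖E‖ ≤ M₁) (hM2 : ‖E'‖ ≤ M₂)
    (J : ℕ) (f : Fin J → W)
    (u v φ : Fin J → U)
    (hu : ∀ j, u j = E (f j)) (hv : ∀ j, v j = E' (f j))
    (hφ : ∀ j, φ j = -(E ((B (u j)) (θ - θ')))) :
    eLpNorm (fun p : Ω × Ω =>
        (1 / (J : ℂ)) * ∑ j, ι ((u j - v j) - φ j) p.1 * conj (ι (u j) p.2))
      2 (μ.prod μ)
    ≤ ENNReal.ofReal (‖ι‖ ^ 2 * ‖B‖ ^ 2 * M₁ ^ 3 * M₂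
        * ((1 / (J : ℝ)) * ∑ j, ‖f j‖ ^ 2) * ‖θ - θ'‖ ^ 2) := by
  have hrem : ∀ j, ‖(u j - v j) - φ j‖ ≤ M₁ ^ 2 * M₂ * ‖B‖ ^ 2 * ‖θ - θ'‖ ^ 2 * ‖f j‖ := by
    intro j
    rw [hφ, hu, hv, sub_neg_eq_add]
    grw [norm_linearization_remainder_le hD hE1 hE2' (f j), hM1, hM2]
  have hu_le : ∀ j, ‖u j‖ ≤ M₁ * ‖f j‖ := fun j => by
    grw [hu, E.le_opNorm, hM1]
  refine (eLpNorm_smul_sum_prod_mul_conj_le ENNReal.ofNat_ne_top Finset.univ _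
    (fun j => ι ((u j - v j) - φ j)) (fun j => ι (u j))).trans (ENNReal.ofReal_le_ofReal ?_)
  calc ‖1 / (J : ℂ)‖ * ∑ j, ‖ι ((u j - v j) - φ j)‖ * ‖ι (u j)‖
      ≤ 1 / J * ∑ j, (‖ι‖ * ‖(u j - v j) - φ j‖) * (‖ι‖ * ‖u j‖) := by
        rw [norm_div, norm_one, Complex.norm_natCast]
        gcongr with j <;> exact ι.le_opNorm _
    _ ≤ 1 / J * ∑ j,
          (‖ι‖ * (M₁ ^ 2 * M₂ * ‖B‖ ^ 2 * ‖θ - θ'‖ ^ 2 * ‖f j‖)) * (‖ι‖ * (M₁ * ‖f j‖)) := by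
        gcongr with j
        exacts [mul_nonneg (norm_nonneg ι) ((norm_nonneg _).trans (hrem j)), hrem j, hu_le j]
    _ = _ := by
        simp only [Finset.mul_sum, Finset.sum_mul]
        refine Finset.sum_congr rfl fun j _ => ?_
        ring

/-- quadratic bound for the first-variable part of the
covariance linearization error. -/
theorem statement13
    {Ω : Type*} [MeasurableSpace Ω] (μ : Measure Ω) [SigmaFinite μ]
    {X U W : Type*} [NormedAddCommGroup X] [NormedSpace ℂ X]
    [NormedAddCommGroup U] [NormedSpace ℂ U] [CompleteSpace U]
    [NormedAddCommGroup W] [NormedSpace ℂ W] [CompleteSpace W]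
    (K : U →L[ℂ] W) (B : U →L[ℂ] X →L[ℂ] W)
    (D : X → U →L[ℂ] W) (hD : ∀ θ u, D θ u = K u + B u θ)
    (ι : U →L[ℂ] Lp ℂ 2 μ)
    (θ θ' : X) (E E' : W →L[ℂ] U)
    (hE1 : E.comp (D θ) = ContinuousLinearMap.id ℂ U)
    (hE2 : (D θ).comp E = ContinuousLinearMap.id ℂ W)
    (hE1' : E'.comp (D θ') = ContinuousLinearMap.id ℂ U)
    (hE2' : (D θ').comp E' = ContinuousLinearMap.id ℂ W)
    (M₁ M₂ : ℝ) (hM1 : ‖E‖ ≤ M₁) (hM2 : ‖E'‖ ≤ M₂)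
    (J : ℕ) (hJ : 1 ≤ J) (f : Fin J → W)
    (u v φ : Fin J → U)
    (hu : ∀ j, u j = E (f j)) (hv : ∀ j, v j = E' (f j))
    (hφ : ∀ j, φ j = -(E ((B (u j)) (θ - θ')))) :
    eLpNorm (fun p : Ω × Ω =>
        (1 / (J : ℂ)) * ∑ j, ι ((u j - v j) - φ j) p.1 * conj (ι (u j) p.2))
      2 (μ.prod μ)
    ≤ ENNReal.ofReal (‖ι‖ ^ 2 * ‖B‖ ^ 2 * M₁ ^ 3 * M₂
        * ((1 / (J : ℝ)) * ∑ j, ‖f j‖ ^ 2) * ‖θ - θ'‖ ^ 2) :=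
  statement13_general μ K B D hD ι θ θ' E E' hE1 hE2' M₁ M₂ hM1 hM2 J f u v φ hu hv hφ
end
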